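/- Let n ≥ 2 and let ψ : ℕ → (0,∞) be decreasing with ψ(k) → 0 as k → ∞, and let C > 1 be a constant with ψ(⌈k/n⌉) ≤ C ψ(k) for all k ≥ 1. If x̂ = (x₁,…,x_{n−1}) ∈ [0,1]^{n−1} satisfies ‖q̂·x̂‖ < ψ(|q̂|)/C for infinitely many q̂ ∈ ℤ^{n−1} \ {0}, where ‖·‖ denotes distance to the nearest integer, then the point (x₁,…,x_{n−1},1) ∈ [0,1]^n lies in V(ψ), i.e. |q·(x₁,…,x_{n−1},1)| < ψ(|q|) for infinitely many q ∈ ℤ^n \ {0}. -/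

import Mathlib

open MeasureTheory

/-- Sup norm (height) of an integer vector. -/
def qnorm {n : ℕ} (q : Fin n → ℤ) : ℕ := Finset.univ.sup fun i => (q i).natAbs

/-- The set `V(ψ)` of points of the unit cube `[0,1]^n` such that
`|q·x| < ψ(|q|)` for infinitely many nonzero integer vectors `q`. -/
def Vset (n : ℕ) (ψ : ℕ → ℝ) : Set (Fin n → ℝ) :=
  {x | (∀ i, x i ∈ Set.Icc (0 : ℝ) 1) ∧
    {q : Fin n → ℤ | q ≠ 0 ∧ |∑ i, (q i : ℝ) * x i| < ψ (qnorm q)}.Infinite}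

/-- Distance from a real number to the nearest integer. -/
noncomputable def distNearestInt (y : ℝ) : ℝ := |y - round y|

/-!
Lift `q̂ ∈ ℤⁿ` to `q = (q̂, -p) ∈ ℤⁿ⁺¹`, where `p` is the integer nearest to `q̂·x̂`. Then
`q·(x̂, 1) = q̂·x̂ - p`, so `|q·(x̂, 1)| = ‖q̂·x̂‖`, and the lift is injective. As `|p| ≤ n|q̂|`,
we get `|q̂| ≤ |q| ≤ (n + 1)|q̂|`, hence `⌈|q|/(n + 1)⌉ ≤ |q̂|` and, `ψ` being decreasing,
`ψ(|q̂|)/C ≤ ψ(⌈|q|/(n + 1)⌉)/C ≤ ψ(|q|)`.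
-/

section Height

variable {n : ℕ}

theorem natAbs_le_qnorm (q : Fin n → ℤ) (i : Fin n) : (q i).natAbs ≤ qnorm q :=
  Finset.le_sup (f := fun i => (q i).natAbs) (Finset.mem_univ i)

theorem qnorm_le_iff {q : Fin n → ℤ} {m : ℕ} : qnorm q ≤ m ↔ ∀ i, (q i).natAbs ≤ m := by
  simp [qnorm, Finset.sup_le_iff]

theorem one_le_qnorm {q : Fin n → ℤ} (hq : q ≠ 0) : 1 ≤ qnorm q := by
  obtain ⟨i, hi⟩ := Function.ne_iff.1 hq
  exact (Int.natAbs_pos.2 hi).trans_le (natAbs_le_qnorm q i)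

theorem qnorm_snoc (q : Fin n → ℤ) (a : ℤ) :
    qnorm (Fin.snoc q a : Fin (n + 1) → ℤ) = max (qnorm q) a.natAbs := by
  refine le_antisymm (qnorm_le_iff.2 fun i => ?_) (max_le (qnorm_le_iff.2 fun i => ?_) ?_)
  · refine Fin.lastCases ?_ (fun j => ?_) i
    · simp
    · simpa using le_max_of_le_left (natAbs_le_qnorm q j)
  · simpa using natAbs_le_qnorm (Fin.snoc q a : Fin (n + 1) → ℤ) i.castSucc
  · simpa using natAbs_le_qnorm (Fin.snoc q a : Fin (n + 1) → ℤ) (Fin.last n)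

theorem abs_sum_mul_le_qnorm {q : Fin n → ℤ} {x : Fin n → ℝ}
    (hx : ∀ i, x i ∈ Set.Icc (0 : ℝ) 1) : |∑ i, (q i : ℝ) * x i| ≤ n * qnorm q := by
  calc |∑ i, (q i : ℝ) * x i| ≤ ∑ i, |(q i : ℝ) * x i| := Finset.abs_sum_le_sum_abs _ _
    _ ≤ ∑ _i : Fin n, (qnorm q : ℝ) := Finset.sum_le_sum fun i _ => by
        have hqi : |(q i : ℝ)| ≤ qnorm q := by
          rw [← Int.cast_abs, Int.abs_eq_natAbs]
          exact_mod_cast natAbs_le_qnorm q i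
        have hxi : |x i| ≤ 1 := abs_le.2 ⟨by linarith [(hx i).1], (hx i).2⟩
        rw [abs_mul]
        nlinarith [abs_nonneg (q i : ℝ), abs_nonneg (x i)]
    _ = n * qnorm q := by simp

end Height

theorem natAbs_round_le {y : ℝ} {m : ℕ} (hy : |y| ≤ m) : (round y).natAbs ≤ m := by
  obtain ⟨hy_lo, hy_hi⟩ := abs_le.1 hy
  have hhi : round y < (m : ℤ) + 1 := by
    exact_mod_cast (show (round y : ℝ) < m + 1 by linarith [round_le_add_half y])
  have hlo : -(m : ℤ) - 1 < round y := by
    exact_mod_cast (show -(m : ℝ) - 1 < round y by linarith [sub_half_lt_round y])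
  omega

theorem Nat.ceil_div_le_of_le_mul {k m d : ℕ} (hd : 0 < d) (h : k ≤ d * m) :
    ⌈(k : ℝ) / d⌉₊ ≤ m := by
  rw [Nat.ceil_le, div_le_iff₀ (by exact_mod_cast hd)]
  exact_mod_cast (mul_comm d m ▸ h)

section Lift

variable {n : ℕ} (x : Fin n → ℝ)

noncomputable def liftByRound (q : Fin n → ℤ) : Fin (n + 1) → ℤ :=
  Fin.snoc q (-round (∑ i, (q i : ℝ) * x i))

theorem init_liftByRound (q : Fin n → ℤ) : Fin.init (liftByRound x q) = q :=
  Fin.init_snoc _ _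

theorem liftByRound_injective : Function.Injective (liftByRound x) := fun a b h => by
  rw [← init_liftByRound x a, h, init_liftByRound]

theorem liftByRound_ne_zero {q : Fin n → ℤ} (hq : q ≠ 0) : liftByRound x q ≠ 0 := fun h =>
  hq (by rw [← init_liftByRound x q, h]; rfl)

theorem sum_liftByRound_mul_snoc_one (q : Fin n → ℤ) :
    ∑ i, (liftByRound x q i : ℝ) * (Fin.snoc x 1 : Fin (n + 1) → ℝ) i =
      ∑ i, (q i : ℝ) * x i - round (∑ i, (q i : ℝ) * x i) := by
  simp [Fin.sum_univ_castSucc, liftByRound, sub_eq_add_neg]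

theorem qnorm_le_qnorm_liftByRound (q : Fin n → ℤ) : qnorm q ≤ qnorm (liftByRound x q) := by
  rw [liftByRound, qnorm_snoc]
  exact le_max_left _ _

theorem qnorm_liftByRound_le (hx : ∀ i, x i ∈ Set.Icc (0 : ℝ) 1) (q : Fin n → ℤ) :
    qnorm (liftByRound x q) ≤ (n + 1) * qnorm q := by
  rw [liftByRound, qnorm_snoc, Int.natAbs_neg]
  have hround := natAbs_round_le (by exact_mod_cast abs_sum_mul_le_qnorm (q := q) hx)
  exact max_le (by nlinarith) (by nlinarith)

end Lift

theorem snoc_one_mem_Icc {n : ℕ} {x : Fin n → ℝ} (hx : ∀ i, x i ∈ Set.Icc (0 : ℝ) 1) :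
    ∀ i, (Fin.snoc x 1 : Fin (n + 1) → ℝ) i ∈ Set.Icc (0 : ℝ) 1 :=
  Fin.lastCases (by simp) (by simpa using hx)

/-- The ambient dimension is `n + 1`, so `x̂` has `n` coordinates. -/
theorem stmt4_general (n : ℕ) (ψ : ℕ → ℝ)
    (hψdec : Antitone ψ)
    (C : ℝ) (hC : 1 < C)
    (hCψ : ∀ k : ℕ, 1 ≤ k → ψ ⌈(k : ℝ) / (n + 1)⌉₊ ≤ C * ψ k)
    (xh : Fin n → ℝ) (hx : ∀ i, xh i ∈ Set.Icc (0 : ℝ) 1)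
    (hinf : {qh : Fin n → ℤ | qh ≠ 0 ∧
      distNearestInt (∑ i, (qh i : ℝ) * xh i) < ψ (qnorm qh) / C}.Infinite) :
    Fin.snoc xh (1 : ℝ) ∈ Vset (n + 1) ψ := by
  refine ⟨snoc_one_mem_Icc hx, (hinf.image (liftByRound_injective xh).injOn).mono ?_⟩
  rintro _ ⟨qh, ⟨hqh, hclose⟩, rfl⟩
  have hceil : ⌈(qnorm (liftByRound xh qh) : ℝ) / (n + 1)⌉₊ ≤ qnorm qh := by
    exact_mod_cast Nat.ceil_div_le_of_le_mul n.succ_pos (qnorm_liftByRound_le xh hx qh)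
  have hψ : ψ (qnorm qh) / C ≤ ψ (qnorm (liftByRound xh qh)) := by
    rw [div_le_iff₀ (by linarith), mul_comm]
    exact (hψdec hceil).trans (hCψ _ ((one_le_qnorm hqh).trans (qnorm_le_qnorm_liftByRound xh qh)))
  refine ⟨liftByRound_ne_zero xh hqh, ?_⟩
  rw [sum_liftByRound_mul_snoc_one]
  exact hclose.trans_le hψ

/-- The dimension here is `n + 1 ≥ 2`, so that `x̂` has `n = (n+1) - 1` coordinates. -/
theorem stmt4 (n : ℕ) (hn : 1 ≤ n) (ψ : ℕ → ℝ) (hψpos : ∀ k, 0 < ψ k)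
    (hψdec : Antitone ψ)
    (hψlim : Filter.Tendsto ψ Filter.atTop (nhds 0))
    (C : ℝ) (hC : 1 < C)
    (hCψ : ∀ k : ℕ, 1 ≤ k → ψ ⌈(k : ℝ) / (n + 1)⌉₊ ≤ C * ψ k)
    (xh : Fin n → ℝ) (hx : ∀ i, xh i ∈ Set.Icc (0 : ℝ) 1)
    (hinf : {qh : Fin n → ℤ | qh ≠ 0 ∧
      distNearestInt (∑ i, (qh i : ℝ) * xh i) < ψ (qnorm qh) / C}.Infinite) :
    Fin.snoc xh (1 : ℝ) ∈ Vset (n + 1) ψ :=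
  stmt4_general n ψ hψdec C hC hCψ xh hx hinf
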